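/- arXiv:1511.09014 — 5 statements merged into one kernel-verified Lean document; each statement's English description precedes it below -/
import Mathlib

section
/- Let z_1,…,z_n be pairwise distinct complex numbers, M^1,…,M^n complex numbers, κ a nonzero complex number, and set a(t) = -(1/κ) Σ_{j=1}^n M^j/(t-z_j). Fix i ∈ {1,…,n} and an integer b ≥ 1, and let f(t) = (t-z_i)^{-b}. Then for all t ∉ {z_1,…,z_n}: κ (f'(t) + a(t) f(t)) = -(M^i + bκ)(t-z_i)^{-b-1} + Σ_{k=1}^{b} Σ_{j≠i} M^j (z_j-z_i)^{-k} (t-z_i)^{k-b-1} - Σ_{j≠i} M^j (z_j-z_i)^{-b} (t-z_j)^{-1}. -/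
/-!
In `κ (f' + a f)` the derivative gives `-bκ (t - z_i)^{-b-1}` and the term `j = i` of `κ a f` gives
`-M^i (t - z_i)^{-b-1}`. Each term `j ≠ i` is `-M^j x^{-b} (x - w)^{-1}` with `x = t - z_i`,
`w = z_j - z_i`, and is expanded into partial fractions by iterating
`x^{-1} (x - w)^{-1} = w^{-1} ((x - w)^{-1} - x^{-1})`.
-/

open Finset

theorem zpow_neg_mul_inv_sub_eq {K : Type*} [Field K] {x w : K} (hx : x ≠ 0) (hw : w ≠ 0)
    (hxw : x - w ≠ 0) (b : ℕ) :
    x ^ (-(b : ℤ)) * (x - w)⁻¹ =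
      w ^ (-(b : ℤ)) * (x - w)⁻¹ - ∑ k ∈ Icc 1 b, w ^ (-(k : ℤ)) * x ^ ((k : ℤ) - b - 1) := by
  induction b with
  | zero => simp
  | succ b ih =>
    have hstep : x⁻¹ * (x - w)⁻¹ = w⁻¹ * (x - w)⁻¹ - w⁻¹ * x⁻¹ := by
      field_simp
      ring
    have hshift : ∑ k ∈ Icc 1 b, w ^ (-(k : ℤ)) * x ^ ((k : ℤ) - ↑(b + 1) - 1) =
        x⁻¹ * ∑ k ∈ Icc 1 b, w ^ (-(k : ℤ)) * x ^ ((k : ℤ) - b - 1) := by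
      rw [mul_sum]
      refine sum_congr rfl fun k _ => ?_
      rw [show (k : ℤ) - ↑(b + 1) - 1 = (k : ℤ) - b - 1 - 1 by push_cast; ring, zpow_sub_one₀ hx]
      ring
    have hpow : ∀ y : K, y ≠ 0 → y ^ (-((b + 1 : ℕ) : ℤ)) = y ^ (-(b : ℤ)) * y⁻¹ := fun y hy => by
      rw [show -((b + 1 : ℕ) : ℤ) = -(b : ℤ) - 1 by push_cast; ring, zpow_sub_one₀ hy]
    rw [sum_Icc_succ_top (by omega), hshift, hpow x hx, hpow w hw,
      show ((b + 1 : ℕ) : ℤ) - ↑(b + 1) - 1 = -1 by ring, zpow_neg_one]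
    linear_combination x⁻¹ * ih + w ^ (-(b : ℤ)) * hstep

theorem stmt_2_general (n : ℕ) (z : Fin n → ℂ) (hz : Function.Injective z)
    (M : Fin n → ℂ) (κ : ℂ) (hκ : κ ≠ 0)
    (a : ℂ → ℂ) (ha : ∀ t, a t = -(1 / κ) * ∑ j, M j / (t - z j))
    (i : Fin n) (b : ℕ)
    (f : ℂ → ℂ) (hf : ∀ t, f t = (t - z i) ^ (-(b : ℤ)))
    (t : ℂ) (ht : ∀ j, t ≠ z j) :
    κ * (deriv f t + a t * f t) =
      -(M i + b * κ) * (t - z i) ^ (-(b : ℤ) - 1) +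
        (∑ k ∈ Finset.Icc 1 b, ∑ j ∈ Finset.univ.filter (· ≠ i),
          M j * (z j - z i) ^ (-(k : ℤ)) * (t - z i) ^ ((k : ℤ) - b - 1)) -
        ∑ j ∈ Finset.univ.filter (· ≠ i),
          M j * (z j - z i) ^ (-(b : ℤ)) * (t - z j)⁻¹ := by
  have hti : t - z i ≠ 0 := sub_ne_zero.mpr (ht i)
  have hderiv : deriv f t = -b * (t - z i) ^ (-(b : ℤ) - 1) := by
    rw [funext hf, deriv_comp_sub_const (f := fun s => s ^ (-(b : ℤ))), deriv_zpow]
    push_cast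
    ring
  have hsplit : ∑ j, M j / (t - z j) =
      M i * (t - z i)⁻¹ + ∑ j ∈ univ.filter (· ≠ i), M j * (t - z j)⁻¹ := by
    simp only [filter_ne', div_eq_mul_inv]
    exact (add_sum_erase _ _ (mem_univ i)).symm
  have hpartial : ∑ j ∈ univ.filter (· ≠ i), M j * (t - z j)⁻¹ * (t - z i) ^ (-(b : ℤ)) =
      ∑ j ∈ univ.filter (· ≠ i), M j * (z j - z i) ^ (-(b : ℤ)) * (t - z j)⁻¹ -
        ∑ k ∈ Icc 1 b, ∑ j ∈ univ.filter (· ≠ i),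
          M j * (z j - z i) ^ (-(k : ℤ)) * (t - z i) ^ ((k : ℤ) - b - 1) := by
    rw [sum_comm, ← sum_sub_distrib]
    refine sum_congr rfl fun j hj => ?_
    have hw : z j - z i ≠ 0 := sub_ne_zero.mpr fun h => (mem_filter.mp hj).2 (hz h)
    have hpf := zpow_neg_mul_inv_sub_eq hti hw
      (by rw [sub_sub_sub_cancel_right]; exact sub_ne_zero.mpr (ht j)) b
    rw [sub_sub_sub_cancel_right] at hpf
    simp only [mul_assoc, ← mul_sum]
    linear_combination M j * hpf
  rw [hderiv, ha, hf, hsplit, mul_assoc (-(1 / κ)), add_mul, sum_mul, hpartial, zpow_sub_one₀ hti]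
  field_simp
  ring

/-- Formula (bff): the twisted differential of `(t - z_i)^{-b}`. -/
theorem stmt_2 (n : ℕ) (z : Fin n → ℂ) (hz : Function.Injective z)
    (M : Fin n → ℂ) (κ : ℂ) (hκ : κ ≠ 0)
    (a : ℂ → ℂ) (ha : ∀ t, a t = -(1 / κ) * ∑ j, M j / (t - z j))
    (i : Fin n) (b : ℕ) (hb : 1 ≤ b)
    (f : ℂ → ℂ) (hf : ∀ t, f t = (t - z i) ^ (-(b : ℤ)))
    (t : ℂ) (ht : ∀ j, t ≠ z j) :
    κ * (deriv f t + a t * f t) =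
      -(M i + b * κ) * (t - z i) ^ (-(b : ℤ) - 1) +
        (∑ k ∈ Finset.Icc 1 b, ∑ j ∈ Finset.univ.filter (· ≠ i),
          M j * (z j - z i) ^ (-(k : ℤ)) * (t - z i) ^ ((k : ℤ) - b - 1)) -
        ∑ j ∈ Finset.univ.filter (· ≠ i),
          M j * (z j - z i) ^ (-(b : ℤ)) * (t - z j)⁻¹ :=
  stmt_2_general n z hz M κ hκ a ha i b f hf t ht
end

section
/- Let z_1,…,z_n (n ≥ 2) be pairwise distinct complex numbers, M^1,…,M^n complex numbers, and κ a nonzero complex number with M^1 = -κ. Set a(t) = -(1/κ) Σ_{j=1}^n M^j/(t-z_j) and g(t) = -κ/(t-z_1). Then for all t ∉ {z_1,…,z_n}: Σ_{j=2}^n (M^j/(z_j-z_1)) · 1/(t-z_j) - (Σ_{j=2}^n M^j/(z_j-z_1)) · 1/(t-z_1) = g'(t) + a(t) g(t). -/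
/-!
Since `g' = κ/(t-z₁)²` and `a g = (t-z₁)⁻¹ Σⱼ Mʲ/(t-zⱼ)`, the resonance `M¹ = -κ` makes the
`j = 1` term of `a g` cancel `g'`. What is left, `Σ_{j>1} Mʲ/((t-zⱼ)(t-z₁))`, is the left-hand
side after splitting each summand into partial fractions.
-/

open Finset

theorem mul_inv_eq_inv_sub_inv_div_sub {K : Type*} [Field K] {t u v : K}
    (hu : t - u ≠ 0) (hv : t - v ≠ 0) (huv : u - v ≠ 0) :
    ((t - u) * (t - v))⁻¹ = ((t - u)⁻¹ - (t - v)⁻¹) / (u - v) := by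
  rw [inv_sub_inv hu hv]
  field_simp
  ring

theorem sum_div_sub_mul_inv_sub_sub {ι K : Type*} [Field K] (s : Finset ι) (M z : ι → K)
    {w t : K} (hzw : ∀ j ∈ s, z j ≠ w) (htz : ∀ j ∈ s, t ≠ z j) (htw : t ≠ w) :
    ∑ j ∈ s, M j / (z j - w) * (t - z j)⁻¹ - (∑ j ∈ s, M j / (z j - w)) * (t - w)⁻¹ =
      ∑ j ∈ s, M j * ((t - z j) * (t - w))⁻¹ := by
  rw [sum_mul, ← sum_sub_distrib]
  refine sum_congr rfl fun j hj => ?_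
  rw [mul_inv_eq_inv_sub_inv_div_sub (sub_ne_zero.2 (htz j hj)) (sub_ne_zero.2 htw)
    (sub_ne_zero.2 (hzw j hj))]
  ring

theorem deriv_const_div_sub (c w t : ℂ) :
    deriv (fun s => c / (s - w)) t = -c / (t - w) ^ 2 :=
  (deriv_comp_sub_const (f := fun s => c / s) w t).trans (deriv_const_div_id c)

theorem twisted_deriv_const_div_sub_of_residue {ι : Type*} [Fintype ι] [DecidableEq ι]
    (M z : ι → ℂ) (i₀ : ι) {κ t : ℂ} (hκ : κ ≠ 0) (hres : M i₀ = -κ) (ht : t ≠ z i₀) :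
    κ / (t - z i₀) ^ 2 + -(1 / κ) * (∑ j, M j / (t - z j)) * (-κ / (t - z i₀)) =
      ∑ j ∈ univ.erase i₀, M j * ((t - z j) * (t - z i₀))⁻¹ := by
  rw [← add_sum_erase _ _ (mem_univ i₀), hres]
  have ht₀ : t - z i₀ ≠ 0 := sub_ne_zero.2 ht
  simp only [mul_inv, ← mul_assoc, ← sum_mul, div_eq_mul_inv]
  field_simp
  ring

/-- The resonance relation at the end of Section 6: if `M^1 = -κ`, then
`Σ_{j>1} (M^j/(z_j-z_1))/(t-z_j) - (Σ_{j>1} M^j/(z_j-z_1))/(t-z_1)` is the twisted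
differential of `g(t) = -κ/(t-z_1)`. -/
theorem stmt_6 (n : ℕ) (hn : 2 ≤ n) (z : Fin n → ℂ) (hz : Function.Injective z)
    (M : Fin n → ℂ) (κ : ℂ) (hκ : κ ≠ 0)
    (hres : M ⟨0, by omega⟩ = -κ)
    (a : ℂ → ℂ) (ha : ∀ t, a t = -(1 / κ) * ∑ j, M j / (t - z j))
    (g : ℂ → ℂ) (hg : ∀ t, g t = -κ / (t - z ⟨0, by omega⟩))
    (t : ℂ) (ht : ∀ j, t ≠ z j) :
    (∑ j ∈ Finset.univ.filter (· ≠ (⟨0, by omega⟩ : Fin n)),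
        (M j / (z j - z ⟨0, by omega⟩)) * (t - z j)⁻¹) -
      (∑ j ∈ Finset.univ.filter (· ≠ (⟨0, by omega⟩ : Fin n)),
        M j / (z j - z ⟨0, by omega⟩)) * (t - z ⟨0, by omega⟩)⁻¹ =
      deriv g t + a t * g t := by
  set i₀ : Fin n := ⟨0, by omega⟩
  have hderiv : deriv g t = κ / (t - z i₀) ^ 2 := by
    rw [show g = fun s => -κ / (s - z i₀) from funext hg, deriv_const_div_sub, neg_neg]
  rw [hderiv, ha, hg, twisted_deriv_const_div_sub_of_residue M z i₀ hκ hres (ht i₀),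
    filter_ne' univ i₀]
  exact sum_div_sub_mul_inv_sub_sub _ M z (fun j hj => hz.ne (ne_of_mem_erase hj))
    (fun j _ => ht j) (ht i₀)
end

section
/- Let z_1,…,z_n be pairwise distinct complex numbers, M^1,…,M^n complex numbers, κ nonzero, and a(t) = -(1/κ) Σ_{j=1}^n M^j/(t-z_j). Fix i ∈ {1,…,n} and suppose M^i = -a_i κ for a nonnegative integer a_i. If f is a rational function whose only poles lie in {z_1,…,z_n} and whose pole order at z_i is at most a_i, then the pole order of f'(t) + a(t) f(t) at z_i is also at most a_i. -/
/-!
Write `f = P / D` with `D = ∏ⱼ (t - zⱼ)^{cⱼ}`. Since `D'/D = ∑ⱼ cⱼ / (t - zⱼ)`, the twisted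
derivative is `f' + a f = (P' - P ∑ⱼ bⱼ / (t - zⱼ)) / D` with residues `bⱼ = cⱼ + Mʲ / κ`.
Clearing the simple poles only at the `zⱼ` with `bⱼ ≠ 0` raises the order there by one; at
resonance with `cᵢ = aᵢ` the residue `bᵢ = cᵢ - aᵢ` vanishes, so the order at `zᵢ` stays `cᵢ`.
-/

open Finset Polynomial

section Calculus

variable {𝕜 : Type*} [NontriviallyNormedField 𝕜] {ι : Type*}

theorem logDeriv_prod_sub_pow (s : Finset ι) (z : ι → 𝕜) (c : ι → ℕ) {t : 𝕜}
    (ht : ∀ j ∈ s, t ≠ z j) :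
    logDeriv (fun u ↦ ∏ j ∈ s, (u - z j) ^ c j) t = ∑ j ∈ s, (c j : 𝕜) / (t - z j) := by
  rw [logDeriv_prod (f := fun j u ↦ (u - z j) ^ c j)
    (fun j hj ↦ pow_ne_zero _ (sub_ne_zero.mpr (ht j hj))) (fun j _ ↦ by fun_prop)]
  refine sum_congr rfl fun j _ ↦ ?_
  rw [logDeriv_fun_pow (by fun_prop), logDeriv_apply, deriv_sub_const, deriv_id'', mul_one_div]

theorem hasDerivAt_eval_div_prod_sub_pow (P : 𝕜[X]) (s : Finset ι) (z : ι → 𝕜) (c : ι → ℕ)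
    {t : 𝕜} (ht : ∀ j ∈ s, t ≠ z j) :
    HasDerivAt (fun u ↦ P.eval u / ∏ j ∈ s, (u - z j) ^ c j)
      ((P.derivative.eval t - P.eval t * ∑ j ∈ s, (c j : 𝕜) / (t - z j)) /
        ∏ j ∈ s, (t - z j) ^ c j) t := by
  have hD0 : ∏ j ∈ s, (t - z j) ^ c j ≠ 0 :=
    prod_ne_zero_iff.mpr fun j hj ↦ pow_ne_zero _ (sub_ne_zero.mpr (ht j hj))
  have hD : HasDerivAt (fun u ↦ ∏ j ∈ s, (u - z j) ^ c j)
      ((∏ j ∈ s, (t - z j) ^ c j) * ∑ j ∈ s, (c j : 𝕜) / (t - z j)) t := by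
    rw [← logDeriv_prod_sub_pow s z c ht, logDeriv_apply, mul_div_cancel₀ _ hD0]
    exact DifferentiableAt.hasDerivAt (by fun_prop)
  refine ((P.hasDerivAt t).fun_div hD hD0).congr_deriv ?_
  generalize ∏ j ∈ s, (t - z j) ^ c j = D at hD0 ⊢
  field_simp

end Calculus

theorem exists_eval_eq_sum_div_mul_prod {K ι : Type*} [Field K] [DecidableEq ι] (s : Finset ι)
    (z b : ι → K) :
    ∃ R : K[X], ∀ t, (∀ j ∈ s, t ≠ z j) →
      R.eval t = (∑ j ∈ s, b j / (t - z j)) * ∏ j ∈ s, (t - z j) := by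
  refine ⟨∑ j ∈ s, C (b j) * ∏ k ∈ s.erase j, (X - C (z k)), fun t ht ↦ ?_⟩
  simp only [eval_finsetSum, eval_mul, eval_C, eval_prod, eval_sub, eval_X, sum_mul]
  refine sum_congr rfl fun j hj ↦ ?_
  rw [← mul_prod_erase s (fun k ↦ t - z k) hj, ← mul_assoc,
    div_mul_cancel₀ _ (sub_ne_zero.mpr (ht j hj))]

theorem prod_pow_mul_prod_eq_prod_pow {M ι : Type*} [CommMonoid M] [Fintype ι] [DecidableEq ι]
    (x : ι → M) (c : ι → ℕ) (s : Finset ι) :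
    (∏ j, x j ^ c j) * ∏ j ∈ s, x j = ∏ j, x j ^ (c j + if j ∈ s then 1 else 0) := by
  simp only [pow_add, prod_mul_distrib, pow_ite, pow_one, pow_zero, prod_ite_mem, univ_inter]

theorem deriv_add_mul_eq_of_eq_eval_div {𝕜 ι : Type*} [NontriviallyNormedField 𝕜] [Fintype ι]
    {f a : 𝕜 → 𝕜} (P : 𝕜[X]) (z m : ι → 𝕜) (c : ι → ℕ)
    (hf : ∀ u, (∀ j, u ≠ z j) → f u = P.eval u / ∏ j, (u - z j) ^ c j)
    {t : 𝕜} (ht : ∀ j, t ≠ z j) (ha : a t = -∑ j, m j / (t - z j)) :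
    deriv f t + a t * f t =
      (P.derivative.eval t - P.eval t * ∑ j, (c j + m j) / (t - z j)) /
        ∏ j, (t - z j) ^ c j := by
  have hf_nhds : f =ᶠ[nhds t] fun u ↦ P.eval u / ∏ j, (u - z j) ^ c j := by
    have hnot : t ∉ Set.range z := fun ⟨j, hj⟩ ↦ ht j hj.symm
    filter_upwards [(Set.finite_range z).isClosed.compl_mem_nhds hnot] with u hu
    exact hf u fun j h ↦ hu ⟨j, h.symm⟩
  rw [hf_nhds.deriv_eq, (hasDerivAt_eval_div_prod_sub_pow P univ z c fun j _ ↦ ht j).deriv,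
    hf t ht, ha]
  simp only [add_div, sum_add_distrib]
  ring

open Finset in
theorem stmt_7_general (n : ℕ) (z : Fin n → ℂ)
    (M : Fin n → ℂ) (κ : ℂ) (hκ : κ ≠ 0)
    (a : ℂ → ℂ) (ha : ∀ t, a t = -(1 / κ) * ∑ j, M j / (t - z j))
    (i : Fin n) (ai : ℕ) (hres : M i = -(ai : ℂ) * κ)
    (f : ℂ → ℂ) (P : Polynomial ℂ) (c : Fin n → ℕ) (hci : c i ≤ ai)
    (hf : ∀ t, (∀ j, t ≠ z j) → f t = P.eval t / ∏ j, (t - z j) ^ c j) :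
    ∃ (Q : Polynomial ℂ) (d : Fin n → ℕ), d i ≤ ai ∧
      ∀ t, (∀ j, t ≠ z j) →
        deriv f t + a t * f t = Q.eval t / ∏ j, (t - z j) ^ d j := by
  classical
  set b : Fin n → ℂ := fun j ↦ c j + M j / κ
  set s := univ.filter (b · ≠ 0)
  obtain ⟨R, hR⟩ := exists_eval_eq_sum_div_mul_prod s z b
  refine ⟨derivative P * ∏ j ∈ s, (X - C (z j)) - P * R,
    fun j ↦ c j + if j ∈ s then 1 else 0, ?_, fun t ht ↦ ?_⟩
  · rcases hci.eq_or_lt with hc_eq | hc_lt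
    · have hbi : b i = 0 := by
        rw [show b i = c i + M i / κ from rfl, hres, hc_eq, neg_mul, neg_div,
          mul_div_cancel_right₀ _ hκ, add_neg_cancel]
      simp [s, hbi, hc_eq]
    · show c i + (if i ∈ s then 1 else 0) ≤ ai
      split_ifs <;> omega
  have hE : ∏ j ∈ s, (t - z j) ≠ 0 := prod_ne_zero_iff.mpr fun j _ ↦ sub_ne_zero.mpr (ht j)
  have hsum : ∑ j ∈ s, b j / (t - z j) = ∑ j, b j / (t - z j) :=
    sum_filter_of_ne fun j _ h ↦ (div_ne_zero_iff.mp h).1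
  have hat : a t = -∑ j, M j / κ / (t - z j) := by
    rw [ha, neg_mul, mul_sum]
    exact congrArg _ (sum_congr rfl fun j _ ↦ by ring)
  rw [deriv_add_mul_eq_of_eq_eval_div P z (fun j ↦ M j / κ) c hf ht hat,
    ← prod_pow_mul_prod_eq_prod_pow, ← hsum, ← mul_div_mul_right _ _ hE]
  simp only [eval_sub, eval_mul, eval_prod, eval_X, eval_C, hR t fun j _ ↦ ht j]
  ring

open Finset in
/-- Restricted complex is a subcomplex: if `M^i = -a_i κ` with `a_i ∈ ℕ`, and `f` is a rational
function whose only poles lie in `{z_1,…,z_n}` with pole order at `z_i` at most `a_i`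
(represented as `f = P / ∏_j (t-z_j)^{c_j}` with `c_i ≤ a_i`), then the twisted differential
`f' + a f` again has pole order at most `a_i` at `z_i` (it admits a representation
`Q / ∏_j (t-z_j)^{d_j}` with `d_i ≤ a_i`). -/
theorem stmt_7 (n : ℕ) (z : Fin n → ℂ) (hz : Function.Injective z)
    (M : Fin n → ℂ) (κ : ℂ) (hκ : κ ≠ 0)
    (a : ℂ → ℂ) (ha : ∀ t, a t = -(1 / κ) * ∑ j, M j / (t - z j))
    (i : Fin n) (ai : ℕ) (hres : M i = -(ai : ℂ) * κ)
    (f : ℂ → ℂ) (P : Polynomial ℂ) (c : Fin n → ℕ) (hci : c i ≤ ai)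
    (hf : ∀ t, (∀ j, t ≠ z j) → f t = P.eval t / ∏ j, (t - z j) ^ c j) :
    ∃ (Q : Polynomial ℂ) (d : Fin n → ℕ), d i ≤ ai ∧
      ∀ t, (∀ j, t ≠ z j) →
        deriv f t + a t * f t = Q.eval t / ∏ j, (t - z j) ^ d j :=
  stmt_7_general n z M κ hκ a ha i ai hres f P c hci hf
end

section
/- Let \hat{sl}_2 = sl_2[T,T^{-1}] ⊕ ℂc with bracket [aT^i, bT^j] = [a,b]T^{i+j} + i·tr(ab)·δ_{i+j,0}·c, and let V be a module over \hat{sl}_2. Let k ∈ ℂ, κ = k + 2, M = -2 + 2κ. Suppose v ∈ V satisfies e·v = 0, (fT)·v = 0, h·v = M v, c·v = k v. Then the vector w = f·(eT^{-1})·(eT^{-1})·v + (1+κ)·(hT^{-1})·(eT^{-1})·v - (1+κ)κ·(eT^{-2})·v satisfies e·w = 0 and (fT)·w = 0. -/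
/-! Move `e` and `fT` to the right through the lowering operators with the Leibniz rule. Since
`e` and `fT` kill `v` and `h`, `c` act on `v`, `(eT⁻¹)v` and `(eT⁻¹)²v` by scalars, `e·w` is a
multiple `M + 4 - 2(1 + κ)` of `(eT⁻¹)²v` and `fT·w` a combination of `f(eT⁻¹)v` and `(hT⁻¹)v`;
all three coefficients vanish for `M = -2 + 2κ`, `κ = k + 2`. -/

section LieModule

variable {R L V : Type*} [CommRing R] [LieRing L] [LieAlgebra R L] [AddCommGroup V] [Module R V]
  [LieRingModule L V] [LieModule R L V]

theorem lie_lie_comm_of_lie_eq_zero {x y : L} (hxy : ⁅x, y⁆ = 0) (v : V) :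
    ⁅x, ⁅y, v⁆⁆ = ⁅y, ⁅x, v⁆⁆ := by
  rw [leibniz_lie, hxy, zero_lie, zero_add]

theorem lie_lie_eq_add_smul_of_lie_eq_smul {x y : L} {v : V} {a b : R} (hxy : ⁅x, y⁆ = a • y)
    (hxv : ⁅x, v⁆ = b • v) : ⁅x, ⁅y, v⁆⁆ = (a + b) • ⁅y, v⁆ := by
  rw [leibniz_lie, hxy, hxv, smul_lie, lie_smul, add_smul]

end LieModule

section AffineSl2

variable {R L V : Type*} [CommRing R] [LieRing L] [LieAlgebra R L] [AddCommGroup V] [Module R V]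
  [LieRingModule L V] [LieModule R L V] {E F H : ℤ → L} {c : L} {v : V} {k M : R}

/-- At `a = 1 + κ`, `b = (1 + κ)κ` this is the Malikov–Feigin–Fuchs vector `F₂₁(1, 2, κ)v`. -/
def mffVector (E F H : ℤ → L) (a b : R) (v : V) : V :=
  ⁅F 0, ⁅E (-1), ⁅E (-1), v⁆⁆⁆ + a • ⁅H (-1), ⁅E (-1), v⁆⁆ - b • ⁅E (-2), v⁆

theorem lie_H_zero_E_neg_one (hHE : ∀ i j : ℤ, ⁅H i, E j⁆ = (2 : R) • E (i + j))
    (hhv : ⁅H 0, v⁆ = M • v) : ⁅H 0, ⁅E (-1), v⁆⁆ = (M + 2) • ⁅E (-1), v⁆ := by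
  rw [lie_lie_eq_add_smul_of_lie_eq_smul (by simpa using hHE 0 (-1)) hhv, add_comm]

theorem lie_F_one_E_neg_one
    (hEF : ∀ i j : ℤ, ⁅E i, F j⁆ = H (i + j) + (if i + j = 0 then (i : R) • c else 0))
    (hfv : ⁅F 1, v⁆ = 0) (hhv : ⁅H 0, v⁆ = M • v) (hcv : ⁅c, v⁆ = k • v) :
    ⁅F 1, ⁅E (-1), v⁆⁆ = (k - M) • v := by
  rw [leibniz_lie, ← lie_skew, hEF, hfv, lie_zero, add_zero]
  simp only [Int.reduceNeg, Int.reduceAdd, ite_true, neg_lie, add_lie, smul_lie, hhv, hcv]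
  module

theorem lie_F_one_E_neg_one_E_neg_one
    (hEF : ∀ i j : ℤ, ⁅E i, F j⁆ = H (i + j) + (if i + j = 0 then (i : R) • c else 0))
    (hHE : ∀ i j : ℤ, ⁅H i, E j⁆ = (2 : R) • E (i + j)) (hcentral : ∀ x : L, ⁅c, x⁆ = 0)
    (hfv : ⁅F 1, v⁆ = 0) (hhv : ⁅H 0, v⁆ = M • v) (hcv : ⁅c, v⁆ = k • v) :
    ⁅F 1, ⁅E (-1), ⁅E (-1), v⁆⁆⁆ = (2 * k - 2 * M - 2) • ⁅E (-1), v⁆ := by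
  have hcEv : ⁅c, ⁅E (-1), v⁆⁆ = k • ⁅E (-1), v⁆ := by
    rw [lie_lie_comm_of_lie_eq_zero (hcentral _), hcv, lie_smul]
  rw [leibniz_lie, ← lie_skew, hEF, lie_F_one_E_neg_one hEF hfv hhv hcv, lie_smul]
  simp only [Int.reduceNeg, Int.reduceAdd, ite_true, neg_lie, add_lie, smul_lie,
    lie_H_zero_E_neg_one hHE hhv, hcEv]
  module

theorem lie_E_zero_mffVector (hEE : ∀ i j : ℤ, ⁅E i, E j⁆ = 0)
    (hEF : ∀ i j : ℤ, ⁅E i, F j⁆ = H (i + j) + (if i + j = 0 then (i : R) • c else 0))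
    (hHE : ∀ i j : ℤ, ⁅H i, E j⁆ = (2 : R) • E (i + j))
    (hev : ⁅E 0, v⁆ = 0) (hhv : ⁅H 0, v⁆ = M • v) (a b : R) :
    ⁅E 0, mffVector E F H a b v⁆ = (M + 4 - 2 * a) • ⁅E (-1), ⁅E (-1), v⁆⁆ := by
  have hEEv : ∀ j, ⁅E 0, ⁅E j, v⁆⁆ = 0 := fun j ↦ by
    rw [lie_lie_comm_of_lie_eq_zero (hEE 0 j), hev, lie_zero]
  have hEEEv : ⁅E 0, ⁅E (-1), ⁅E (-1), v⁆⁆⁆ = 0 := by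
    rw [lie_lie_comm_of_lie_eq_zero (hEE 0 (-1)), hEEv, lie_zero]
  have hHEEv : ⁅H 0, ⁅E (-1), ⁅E (-1), v⁆⁆⁆ = (2 + (M + 2)) • ⁅E (-1), ⁅E (-1), v⁆⁆ :=
    lie_lie_eq_add_smul_of_lie_eq_smul (by simpa using hHE 0 (-1)) (lie_H_zero_E_neg_one hHE hhv)
  have hEFEEv : ⁅E 0, ⁅F 0, ⁅E (-1), ⁅E (-1), v⁆⁆⁆⁆ = (2 + (M + 2)) • ⁅E (-1), ⁅E (-1), v⁆⁆ := by
    rw [leibniz_lie, hEF, hEEEv, lie_zero, add_zero]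
    simpa using hHEEv
  have hEHEv : ⁅E 0, ⁅H (-1), ⁅E (-1), v⁆⁆⁆ = -((2 : R) • ⁅E (-1), ⁅E (-1), v⁆⁆) := by
    rw [leibniz_lie, ← lie_skew, hHE, hEEv, lie_zero, add_zero, neg_lie, smul_lie]
    simp
  rw [mffVector, lie_sub, lie_add, lie_smul, lie_smul, hEFEEv, hEHEv, hEEv]
  module

theorem lie_F_one_mffVector
    (hFF : ∀ i j : ℤ, ⁅F i, F j⁆ = 0)
    (hEF : ∀ i j : ℤ, ⁅E i, F j⁆ = H (i + j) + (if i + j = 0 then (i : R) • c else 0))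
    (hHE : ∀ i j : ℤ, ⁅H i, E j⁆ = (2 : R) • E (i + j))
    (hHF : ∀ i j : ℤ, ⁅H i, F j⁆ = -((2 : R) • F (i + j))) (hcentral : ∀ x : L, ⁅c, x⁆ = 0)
    (hfv : ⁅F 1, v⁆ = 0) (hhv : ⁅H 0, v⁆ = M • v) (hcv : ⁅c, v⁆ = k • v) (a b : R) :
    ⁅F 1, mffVector E F H a b v⁆ =
      (2 * k - 2 * M - 2 + 2 * a) • ⁅F 0, ⁅E (-1), v⁆⁆ + (a * (k - M) + b) • ⁅H (-1), v⁆ := by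
  have hFFEEv : ⁅F 1, ⁅F 0, ⁅E (-1), ⁅E (-1), v⁆⁆⁆⁆ =
      (2 * k - 2 * M - 2) • ⁅F 0, ⁅E (-1), v⁆⁆ := by
    rw [lie_lie_comm_of_lie_eq_zero (hFF 1 0),
      lie_F_one_E_neg_one_E_neg_one hEF hHE hcentral hfv hhv hcv, lie_smul]
  have hFHEv : ⁅F 1, ⁅H (-1), ⁅E (-1), v⁆⁆⁆ =
      (2 : R) • ⁅F 0, ⁅E (-1), v⁆⁆ + (k - M) • ⁅H (-1), v⁆ := by
    rw [leibniz_lie, ← lie_skew, hHF, lie_F_one_E_neg_one hEF hfv hhv hcv, lie_smul]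
    simp
  have hFE2v : ⁅F 1, ⁅E (-2), v⁆⁆ = -⁅H (-1), v⁆ := by
    rw [leibniz_lie, ← lie_skew, hEF, hfv, lie_zero, add_zero]
    simp
  rw [mffVector, lie_sub, lie_add, lie_smul, lie_smul, hFFEEv, hFHEv, hFE2v]
  module

end AffineSl2

theorem stmt_11_general (L : Type*) [LieRing L] [LieAlgebra ℂ L]
    (E F H : ℤ → L) (c : L)
    (hEE : ∀ i j : ℤ, ⁅E i, E j⁆ = 0)
    (hFF : ∀ i j : ℤ, ⁅F i, F j⁆ = 0)
    (hEF : ∀ i j : ℤ, ⁅E i, F j⁆ = H (i + j) + (if i + j = 0 then (i : ℂ) • c else 0))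
    (hHE : ∀ i j : ℤ, ⁅H i, E j⁆ = (2 : ℂ) • E (i + j))
    (hHF : ∀ i j : ℤ, ⁅H i, F j⁆ = -((2 : ℂ) • F (i + j)))
    (hcentral : ∀ x : L, ⁅c, x⁆ = 0)
    (V : Type*) [AddCommGroup V] [Module ℂ V] [LieRingModule L V] [LieModule ℂ L V]
    (k κ M : ℂ) (hκ : κ = k + 2) (hM : M = -2 + 2 * κ)
    (v : V) (hev : ⁅E 0, v⁆ = 0) (hfTv : ⁅F 1, v⁆ = 0)
    (hhv : ⁅H 0, v⁆ = M • v) (hcv : ⁅c, v⁆ = k • v)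
    (w : V)
    (hw : w = ⁅F 0, ⁅E (-1), ⁅E (-1), v⁆⁆⁆ + (1 + κ) • ⁅H (-1), ⁅E (-1), v⁆⁆
            - ((1 + κ) * κ) • ⁅E (-2), v⁆) :
    ⁅E 0, w⁆ = 0 ∧ ⁅F 1, w⁆ = 0 := by
  have hE : M + 4 - 2 * (1 + κ) = 0 := by rw [hM]; ring
  have hF₁ : 2 * k - 2 * M - 2 + 2 * (1 + κ) = 0 := by rw [hM, hκ]; ring
  have hF₂ : (1 + κ) * (k - M) + (1 + κ) * κ = 0 := by rw [hM, hκ]; ring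
  have hw' : w = mffVector E F H (1 + κ) ((1 + κ) * κ) v := hw
  rw [hw', lie_E_zero_mffVector hEE hEF hHE hev hhv, hE, zero_smul,
    lie_F_one_mffVector hFF hEF hHE hHF hcentral hfTv hhv hcv, hF₁, hF₂, zero_smul, zero_smul,
    add_zero]
  exact ⟨rfl, rfl⟩

/-- Example 4.6(2): in a module over the affine Lie algebra `\hat{sl}_2` (presented by
generators `E i = eT^i`, `F i = fT^i`, `H i = hT^i`, central `c` and the affine bracket
relations), if `κ = k+2`, `M = -2+2κ` and `v` satisfies `e·v = 0`, `(fT)·v = 0`, `h·v = M v`,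
`c·v = k v`, then the Malikov–Feigin–Fuchs vector
`w = f·(eT⁻¹)²·v + (1+κ)(hT⁻¹)(eT⁻¹)·v - (1+κ)κ(eT⁻²)·v` is annihilated by `e` and `fT`. -/
theorem stmt_11 (L : Type*) [LieRing L] [LieAlgebra ℂ L]
    (E F H : ℤ → L) (c : L)
    (hEE : ∀ i j : ℤ, ⁅E i, E j⁆ = 0)
    (hFF : ∀ i j : ℤ, ⁅F i, F j⁆ = 0)
    (hHH : ∀ i j : ℤ, ⁅H i, H j⁆ = if i + j = 0 then (2 * (i : ℂ)) • c else 0)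
    (hEF : ∀ i j : ℤ, ⁅E i, F j⁆ = H (i + j) + (if i + j = 0 then (i : ℂ) • c else 0))
    (hHE : ∀ i j : ℤ, ⁅H i, E j⁆ = (2 : ℂ) • E (i + j))
    (hHF : ∀ i j : ℤ, ⁅H i, F j⁆ = -((2 : ℂ) • F (i + j)))
    (hcentral : ∀ x : L, ⁅c, x⁆ = 0)
    (V : Type*) [AddCommGroup V] [Module ℂ V] [LieRingModule L V] [LieModule ℂ L V]
    (k κ M : ℂ) (hκ : κ = k + 2) (hM : M = -2 + 2 * κ)
    (v : V) (hev : ⁅E 0, v⁆ = 0) (hfTv : ⁅F 1, v⁆ = 0)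
    (hhv : ⁅H 0, v⁆ = M • v) (hcv : ⁅c, v⁆ = k • v)
    (w : V)
    (hw : w = ⁅F 0, ⁅E (-1), ⁅E (-1), v⁆⁆⁆ + (1 + κ) • ⁅H (-1), ⁅E (-1), v⁆⁆
            - ((1 + κ) * κ) • ⁅E (-2), v⁆) :
    ⁅E 0, w⁆ = 0 ∧ ⁅F 1, w⁆ = 0 :=
  stmt_11_general L E F H c hEE hFF hEF hHE hHF hcentral V k κ M hκ hM v hev hfTv hhv hcv w hw
end

section
/- Let z_1,…,z_n be pairwise distinct complex numbers and M^1,…,M^n complex numbers, κ ≠ 0. Consider the rational 1-form in the variables (z_1,…,z_n,t): β = -Σ_{i=1}^n (M^i/κ) d(t-z_i)/(t-z_i) + Σ_{i<j} (M^i M^j/(2κ)) d(z_i-z_j)/(z_i-z_j), and let ω_i = M^i d(t-z_i)/(t-z_i). Then κ β ∧ ω_i = Σ_{j<k, i∉{j,k}} (M^j M^k/2) (d(z_j-z_k)/(z_j-z_k)) ∧ ω_i + Σ_{j≠i} (M^j(M^i-2)/2) (d(z_j-z_i)/(z_j-z_i)) ∧ ω_i + Σ_{j≠i} M^i (d(z_j-z_i)/(z_j-z_i))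 ∧ ω_j, as an identity of rational 2-forms on the complement of the diagonals z_i = z_j and the hypersurfaces t = z_i in ℂ^{n+1}. -/
/-!
Write `κβ = -∑ⱼ Mʲ dlog(t - zⱼ) + ∑_{j<k} (MʲMᵏ/2) dlog(zⱼ - zₖ)`. In `κβ ∧ ωᵢ` the term `j = i`
vanishes, as `ωᵢ` is a multiple of `dlog(t - zᵢ)`. For `j ≠ i` the Arnold relation
`dlog(t - zⱼ) ∧ dlog(t - zᵢ) = dlog(zⱼ - zᵢ) ∧ dlog(t - zᵢ) - dlog(zⱼ - zᵢ) ∧ dlog(t - zⱼ)`,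
a consequence of `d(t - zⱼ) - d(t - zᵢ) = d(zᵢ - zⱼ)`, produces the last sum and the coefficient
`-Mʲ` of `dlog(zⱼ - zᵢ) ∧ ωᵢ`. The pairs `{j, k}` containing `i` add `MʲMⁱ/2` to that coefficient,
and `-Mʲ + MʲMⁱ/2 = Mʲ(Mⁱ - 2)/2`.
-/

section Wedge

variable {σ R : Type*} [CommRing R]

def wedge : (σ → R) →ₗ[R] (σ → R) →ₗ[R] σ → σ → R :=
  LinearMap.mk₂ R (fun a b s s' => a s * b s' - a s' * b s)
    (fun _ _ _ => by ext; simp only [Pi.add_apply]; ring)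
    (fun _ _ _ => by ext; simp only [Pi.smul_apply, smul_eq_mul]; ring)
    (fun _ _ _ => by ext; simp only [Pi.add_apply]; ring)
    (fun _ _ _ => by ext; simp only [Pi.smul_apply, smul_eq_mul]; ring)

@[simp]
theorem wedge_apply (a b : σ → R) (s s' : σ) : wedge a b s s' = a s * b s' - a s' * b s := rfl

theorem wedge_self (a : σ → R) : wedge a a = 0 := by
  ext; simp only [wedge_apply, Pi.zero_apply]; ring

end Wedge

section LogForm

variable {σ K : Type*} [Field K]

def logForm (u : K) (du : σ → K) : σ → K := u⁻¹ • du

theorem logForm_neg (u : K) (du : σ → K) : logForm (-u) (-du) = logForm u du := by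
  simp only [logForm, inv_neg, neg_smul_neg]

theorem eq_logForm_single_sub_single [DecidableEq σ] {f : σ → K} {u : K} {a b : σ} (hab : a ≠ b)
    (hf : ∀ l, f l = (if l = a then 1 else if l = b then -1 else 0) / u) :
    f = logForm u (Pi.single a 1 - Pi.single b 1) := by
  ext l
  rw [hf, logForm, Pi.smul_apply, Pi.sub_apply, Pi.single_apply, Pi.single_apply, smul_eq_mul]
  split_ifs <;> simp_all [div_eq_inv_mul]

theorem wedge_logForm_arnold {u v : K} (hu : u ≠ 0) (hv : v ≠ 0) (huv : u - v ≠ 0)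
    (du dv : σ → K) :
    wedge (logForm u du) (logForm v dv) =
      wedge (logForm (u - v) (du - dv)) (logForm v dv) -
        wedge (logForm (u - v) (du - dv)) (logForm u du) := by
  ext s s'
  simp only [wedge_apply, logForm, Pi.sub_apply, Pi.smul_apply, smul_eq_mul]
  field_simp
  ring

end LogForm

open Finset in
theorem sum_filter_lt_eq_sum_filter_ne_add {ι M : Type*} [Fintype ι] [LinearOrder ι]
    [AddCommMonoid M] (i : ι) (f : ι → ι → M) (hf : ∀ j ≠ i, f i j = f j i) :
    ∑ q ∈ univ.filter (fun q : ι × ι => q.1 < q.2), f q.1 q.2 =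
      ∑ q ∈ univ.filter (fun q : ι × ι => q.1 < q.2 ∧ q.1 ≠ i ∧ q.2 ≠ i), f q.1 q.2 +
        ∑ j ∈ univ.filter (· ≠ i), f j i := by
  rw [← sum_filter_add_sum_filter_not _ (fun q : ι × ι => q.1 ≠ i ∧ q.2 ≠ i), filter_filter]
  congr 1
  refine sum_nbij' (fun q => if q.1 = i then q.2 else q.1)
    (fun j => if j < i then (j, i) else (i, j)) ?_ ?_ ?_ ?_ ?_
  all_goals intro q; simp only [mem_filter, mem_univ, true_and]
  all_goals grind

open Finset in
theorem wedge_expand_of_arnold {ι σ K : Type*} [Fintype ι] [LinearOrder ι] [Field K]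
    [NeZero (2 : K)] (a : ι → σ → K) (c : ι → ι → σ → K) (M : ι → K) (i : ι)
    (hc : ∀ j ≠ i, c i j = c j i)
    (harnold : ∀ j ≠ i, wedge (a j) (a i) = wedge (c j i) (a i) - wedge (c j i) (a j)) :
    wedge (-∑ j, M j • a j +
        ∑ q ∈ univ.filter (fun q : ι × ι => q.1 < q.2), (M q.1 * M q.2 / 2) • c q.1 q.2)
        (M i • a i) =
      ∑ q ∈ univ.filter (fun q : ι × ι => q.1 < q.2 ∧ q.1 ≠ i ∧ q.2 ≠ i),
          (M q.1 * M q.2 / 2) • wedge (c q.1 q.2) (M i • a i) +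
        ∑ j ∈ univ.filter (· ≠ i), (M j * (M i - 2) / 2) • wedge (c j i) (M i • a i) +
        ∑ j ∈ univ.filter (· ≠ i), M i • wedge (c j i) (M j • a j) := by
  have hdiag : ∀ j ∈ univ, M j • wedge (a j) (M i • a i) ≠ 0 → j ≠ i := by
    rintro j - hj rfl
    simp [wedge_self] at hj
  have hterm : ∀ j ≠ i, M j • wedge (a j) (M i • a i) =
      M j • wedge (c j i) (M i • a i) - M i • wedge (c j i) (M j • a j) := by
    intro j hj
    simp only [map_smul, harnold j hj]
    module
  have hcoef : ∀ j, M j * (M i - 2) / 2 = M j * M i / 2 - M j := fun j => by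
    field_simp
  simp only [LinearMap.map_add₂, LinearMap.map_neg₂, LinearMap.map_sum₂, LinearMap.map_smul₂]
  rw [← sum_filter_of_ne hdiag, sum_congr rfl fun j hj => hterm j (mem_filter.1 hj).2,
    sum_filter_lt_eq_sum_filter_ne_add i (fun j k => (M j * M k / 2) • wedge (c j k) (M i • a i))
      fun j hj => by rw [hc j hj, mul_comm]]
  simp only [hcoef, sub_smul, sum_sub_distrib]
  abel

open Finset in
/-- Differential forms are encoded by their coefficients in the coordinates `some j ↦ z_j`,
`none ↦ t`: `dT i` is `d(t-z_i)/(t-z_i)`, `dZ i j` is `d(z_i-z_j)/(z_i-z_j)`, `B` is `β`, `W i`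
is `ω_i`, and `A ∧ B` has `(s,s')`-coefficient `A s * B s' - A s' * B s`. -/
theorem stmt_14 (n : ℕ) (z : Fin n → ℂ) (t : ℂ) (hz : Function.Injective z)
    (ht : ∀ j, t ≠ z j) (M : Fin n → ℂ) (κ : ℂ) (hκ : κ ≠ 0)
    (dT : Fin n → Option (Fin n) → ℂ)
    (hdTt : ∀ i, dT i none = (t - z i)⁻¹)
    (hdTz : ∀ i j, dT i (some j) = if j = i then -(t - z i)⁻¹ else 0)
    (dZ : Fin n → Fin n → Option (Fin n) → ℂ)
    (hdZt : ∀ i j, dZ i j none = 0)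
    (hdZz : ∀ i j l, dZ i j (some l) =
      (if l = i then 1 else if l = j then -1 else 0) / (z i - z j))
    (B : Option (Fin n) → ℂ)
    (hB : ∀ s, B s = -(∑ i, (M i / κ) * dT i s) +
      ∑ q ∈ univ.filter (fun q : Fin n × Fin n => q.1 < q.2),
        (M q.1 * M q.2 / (2 * κ)) * dZ q.1 q.2 s)
    (W : Fin n → Option (Fin n) → ℂ)
    (hW : ∀ i s, W i s = M i * dT i s)
    (i : Fin n) :
    ∀ s s' : Option (Fin n),
      κ * (B s * W i s' - B s' * W i s) =
        (∑ q ∈ univ.filter (fun q : Fin n × Fin n => q.1 < q.2 ∧ q.1 ≠ i ∧ q.2 ≠ i),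
          (M q.1 * M q.2 / 2) * (dZ q.1 q.2 s * W i s' - dZ q.1 q.2 s' * W i s)) +
        (∑ j ∈ univ.filter (· ≠ i),
          (M j * (M i - 2) / 2) * (dZ j i s * W i s' - dZ j i s' * W i s)) +
        ∑ j ∈ univ.filter (· ≠ i),
          M i * (dZ j i s * W j s' - dZ j i s' * W j s) := by
  have hdT : ∀ j, dT j = logForm (t - z j) (Pi.single none 1 - Pi.single (some j) 1) :=
    fun j => eq_logForm_single_sub_single (Option.some_ne_none j).symm <| by
      rintro (_ | l)
      · simp [hdTt]
      · simp only [hdTz, reduceCtorEq, if_false, Option.some.injEq]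
        split_ifs <;> simp [neg_div]
  have hdZ : ∀ j k, j ≠ k →
      dZ j k = logForm (z j - z k) (Pi.single (some j) 1 - Pi.single (some k) 1) :=
    fun j k hjk => eq_logForm_single_sub_single (Option.some_injective _ |>.ne hjk) <| by
      rintro (_ | l) <;> simp [hdZt, hdZz]
  have hdZ_comm : ∀ j ≠ i, dZ i j = dZ j i := fun j hj => by
    rw [hdZ i j hj.symm, hdZ j i hj, ← logForm_neg, neg_sub, neg_sub]
  have harnold : ∀ j ≠ i,
      wedge (dT j) (dT i) = wedge (dZ j i) (dT i) - wedge (dZ j i) (dT j) := by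
    intro j hj
    have hzij : (t - z j) - (t - z i) ≠ 0 := by
      rw [sub_sub_sub_cancel_left]; exact sub_ne_zero.2 (hz.ne hj.symm)
    have := wedge_logForm_arnold (sub_ne_zero.2 (ht j)) (sub_ne_zero.2 (ht i)) hzij
      (Pi.single none 1 - Pi.single (some j) 1) (Pi.single none 1 - Pi.single (some i) 1)
    rwa [sub_sub_sub_cancel_left, sub_sub_sub_cancel_left, ← hdZ i j hj.symm, ← hdT, ← hdT,
      hdZ_comm j hj] at this
  have hκB : κ • B = -∑ j, M j • dT j +
      ∑ q ∈ univ.filter (fun q : Fin n × Fin n => q.1 < q.2), (M q.1 * M q.2 / 2) • dZ q.1 q.2 := by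
    ext s
    simp only [hB, Pi.smul_apply, Pi.add_apply, Pi.neg_apply, Finset.sum_apply, smul_eq_mul,
      mul_add, mul_neg, mul_sum]
    congr 3 <;> field_simp
  have hW' : ∀ j, M j • dT j = W j := fun j => funext fun s => (hW j s).symm
  have key := wedge_expand_of_arnold dT dZ M i hdZ_comm harnold
  rw [← hκB, LinearMap.map_smul₂] at key
  simp only [hW'] at key
  intro s s'
  simpa [Finset.sum_apply] using congr_fun₂ key s s'
end
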